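/- arXiv:1012.3846 — 4 statements merged into one kernel-verified Lean document; each statement's English description precedes it below -/
import Mathlib

section
/- Let u, v : ℝ × ℝ → ℝ be the conjugate harmonic functions u(x,y) = x³ − 3xy² − 3x and v(x,y) = −y³ + 3x²y − 3y (the real and imaginary parts of f(z) = z³ − 3z). Then the graphs of u and v have the same Gaussian curvature at every point, that is, (u_xx·u_yy − u_xy²)/(1 + u_x² + u_y²)² = (v_xx·v_yy − v_xy²)/(1 + v_x² + v_y²)² everywhere, yet u and v are not topologically equivalent: there do not exist a homeomorphism φ : ℝ × ℝ → ℝ × ℝ and a homeomorphism ψ : ℝ → ℝ such that ψ ∘ u = v ∘ φ. -/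
/-!
Both graphs have the same Gaussian curvature because `u` and `v` satisfy the Cauchy–Riemann
equations: the gradients of `u` and `v` have the same length, and by the symmetry of second
derivatives and harmonicity both Hessian determinants equal `-(u_xx² + u_xy²)`.

A topological equivalence `ψ ∘ u = v ∘ φ` carries every level set of `u` homeomorphically onto
a level set of `v`. The zero set of `v = y (3x² - y² - 3)` is the `x`-axis together with the
hyperbola `3x² - y² = 3`, whose two branches cross the axis at `(±1, 0)`; so it is connected.
No level set of `u` is: some vertical line misses it, yet it has points on both sides of that
line.
-/
open Set

section PartialDerivatives

variable {𝕜 F : Type*} [NontriviallyNormedField 𝕜] [NormedAddCommGroup F] [NormedSpace 𝕜 F]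
  {f : 𝕜 × 𝕜 → F} {p : 𝕜 × 𝕜}

theorem fderiv_apply_one_zero (hf : DifferentiableAt 𝕜 f p) :
    fderiv 𝕜 f p (1, 0) = deriv (fun x => f (x, p.2)) p.1 :=
  (hf.hasFDerivAt.comp_hasDerivAt p.1
    ((hasDerivAt_id p.1).prodMk (hasDerivAt_const p.1 p.2))).deriv.symm

theorem fderiv_apply_zero_one (hf : DifferentiableAt 𝕜 f p) :
    fderiv 𝕜 f p (0, 1) = deriv (fun y => f (p.1, y)) p.2 :=
  (hf.hasFDerivAt.comp_hasDerivAt p.2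
    ((hasDerivAt_const p.2 p.1).prodMk (hasDerivAt_id p.2))).deriv.symm

end PartialDerivatives

theorem fderiv_fderiv_apply_comm {E F : Type*} [NormedAddCommGroup E] [NormedSpace ℝ E]
    [NormedAddCommGroup F] [NormedSpace ℝ F] {f : E → F} (hf : ContDiff ℝ 2 f) (p v w : E) :
    fderiv ℝ (fun q => fderiv ℝ f q v) p w = fderiv ℝ (fun q => fderiv ℝ f q w) p v := by
  have hd : DifferentiableAt ℝ (fderiv ℝ f) p :=
    (hf.fderiv_right (m := 1) le_rfl).differentiable one_ne_zero p
  rw [fderiv_clm_apply hd (differentiableAt_const v),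
    fderiv_clm_apply hd (differentiableAt_const w)]
  simpa using hf.contDiffAt.isSymmSndFDerivAt (by simp) w v

noncomputable def graphCurvature (u : ℝ × ℝ → ℝ) (p : ℝ × ℝ) : ℝ :=
  (fderiv ℝ (fun q => fderiv ℝ u q (1, 0)) p (1, 0) *
      fderiv ℝ (fun q => fderiv ℝ u q (0, 1)) p (0, 1) -
    (fderiv ℝ (fun q => fderiv ℝ u q (1, 0)) p (0, 1)) ^ 2) /
    (1 + (fderiv ℝ u p (1, 0)) ^ 2 + (fderiv ℝ u p (0, 1)) ^ 2) ^ 2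

theorem graphCurvature_eq_of_cauchyRiemann {u v : ℝ × ℝ → ℝ} (hu : ContDiff ℝ 2 u)
    (hv : ContDiff ℝ 2 v) (hx : ∀ q, fderiv ℝ u q (1, 0) = fderiv ℝ v q (0, 1))
    (hy : ∀ q, fderiv ℝ u q (0, 1) = -fderiv ℝ v q (1, 0)) :
    graphCurvature u = graphCurvature v := by
  funext p
  have hvx : (fun q => fderiv ℝ v q (1, 0)) = fun q => -fderiv ℝ u q (0, 1) := by
    funext q; rw [hy, neg_neg]
  have hvy : (fun q => fderiv ℝ v q (0, 1)) = fun q => fderiv ℝ u q (1, 0) :=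
    funext fun q => (hx q).symm
  have hmixed := fderiv_fderiv_apply_comm hu p (1, 0) (0, 1)
  -- `u` is harmonic: `u_xx = v_yx = v_xy = -u_yy`
  have hharmonic : fderiv ℝ (fun q => fderiv ℝ u q (1, 0)) p (1, 0) =
      -fderiv ℝ (fun q => fderiv ℝ u q (0, 1)) p (0, 1) := by
    simpa only [hvx, hvy, fderiv_fun_neg, neg_apply] using
      fderiv_fderiv_apply_comm hv p (0, 1) (1, 0)
  simp only [graphCurvature, hvx, hvy, fderiv_fun_neg, neg_apply, hx p, hy p,
    hmixed, hharmonic]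
  ring

def cubicRe (p : ℝ × ℝ) : ℝ := p.1 ^ 3 - 3 * p.1 * p.2 ^ 2 - 3 * p.1

def cubicIm (p : ℝ × ℝ) : ℝ := -p.2 ^ 3 + 3 * p.1 ^ 2 * p.2 - 3 * p.2

theorem contDiff_cubicRe : ContDiff ℝ 2 cubicRe := by
  unfold cubicRe; fun_prop

theorem contDiff_cubicIm : ContDiff ℝ 2 cubicIm := by
  unfold cubicIm; fun_prop

theorem fderiv_cubicRe_apply_one_zero (q : ℝ × ℝ) :
    fderiv ℝ cubicRe q (1, 0) = 3 * q.1 ^ 2 - 3 * q.2 ^ 2 - 3 := by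
  rw [fderiv_apply_one_zero (contDiff_cubicRe.differentiable two_ne_zero q)]
  simp (disch := fun_prop) only [cubicRe, deriv_fun_sub, deriv_fun_mul, deriv_fun_pow, deriv_const',
    deriv_const_mul_id', deriv_id'']
  ring

theorem fderiv_cubicRe_apply_zero_one (q : ℝ × ℝ) :
    fderiv ℝ cubicRe q (0, 1) = -(6 * q.1 * q.2) := by
  rw [fderiv_apply_zero_one (contDiff_cubicRe.differentiable two_ne_zero q)]
  simp (disch := fun_prop) only [cubicRe, deriv_fun_sub, deriv_fun_mul, deriv_fun_pow, deriv_const',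
    deriv_id'']
  ring

theorem fderiv_cubicIm_apply_one_zero (q : ℝ × ℝ) :
    fderiv ℝ cubicIm q (1, 0) = 6 * q.1 * q.2 := by
  rw [fderiv_apply_one_zero (contDiff_cubicIm.differentiable two_ne_zero q)]
  simp (disch := fun_prop) only [cubicIm, deriv_fun_add, deriv_fun_sub, deriv.fun_neg',
    deriv_fun_mul, deriv_fun_pow, deriv_const', deriv_id'']
  ring

theorem fderiv_cubicIm_apply_zero_one (q : ℝ × ℝ) :
    fderiv ℝ cubicIm q (0, 1) = 3 * q.1 ^ 2 - 3 * q.2 ^ 2 - 3 := by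
  rw [fderiv_apply_zero_one (contDiff_cubicIm.differentiable two_ne_zero q)]
  simp (disch := fun_prop) only [cubicIm, deriv_fun_add, deriv_fun_sub, deriv.fun_neg',
    deriv_fun_pow, deriv_const_mul_id', deriv_id'']
  ring

theorem graphCurvature_cubicRe_eq_cubicIm : graphCurvature cubicRe = graphCurvature cubicIm :=
  graphCurvature_eq_of_cauchyRiemann contDiff_cubicRe contDiff_cubicIm
    (fun q => by rw [fderiv_cubicRe_apply_one_zero, fderiv_cubicIm_apply_zero_one])
    (fun q => by rw [fderiv_cubicRe_apply_zero_one, fderiv_cubicIm_apply_one_zero])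

theorem isConnected_preimage_singleton_of_comp_eq {X Y Z W : Type*} [TopologicalSpace X]
    [TopologicalSpace Y] (φ : X ≃ₜ Y) {ψ : Z → W} (hψ : Function.Injective ψ)
    {u : X → Z} {v : Y → W} (h : ∀ p, ψ (u p) = v (φ p)) {c : Z}
    (hc : IsConnected (v ⁻¹' {ψ c})) :
    IsConnected (u ⁻¹' {c}) := by
  have hfiber : u ⁻¹' {c} = φ ⁻¹' (v ⁻¹' {ψ c}) := by
    ext p
    simp only [mem_preimage, mem_singleton_iff, ← h, hψ.eq_iff]
  rwa [hfiber, φ.isConnected_preimage]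

theorem exists_cubicRe_eq {b c : ℝ} (hb : 0 < b) (hc : c ≤ b ^ 3 - 3 * b) :
    ∃ y, cubicRe (b, y) = c := by
  refine ⟨√((b ^ 3 - 3 * b - c) / (3 * b)), ?_⟩
  have hy := Real.sq_sqrt (div_nonneg (sub_nonneg.mpr hc) (by positivity : (0 : ℝ) ≤ 3 * b))
  simp only [cubicRe, hy]
  field_simp
  ring

theorem exists_cubicRe_ne (c : ℝ) : ∃ a ∈ Icc (-2 : ℝ) 2, ∀ y, cubicRe (a, y) ≠ c := by
  by_cases hc : c = 0
  · refine ⟨1, by norm_num, fun y => ?_⟩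
    simp only [cubicRe, hc]
    nlinarith [sq_nonneg y]
  · exact ⟨0, by norm_num, fun y => by simpa [cubicRe] using Ne.symm hc⟩

theorem not_isPreconnected_cubicRe_preimage_singleton (c : ℝ) :
    ¬ IsPreconnected (cubicRe ⁻¹' {c}) := by
  intro hconn
  set b := |c| + 2 with hb_def
  have hb : 2 ≤ b := le_add_of_nonneg_left (abs_nonneg c)
  have hbc : |c| ≤ b ^ 3 - 3 * b := by
    nlinarith [mul_nonneg (mul_nonneg (sub_nonneg.2 hb) (by linarith : 0 ≤ b))
      (by linarith : 0 ≤ b + 2)]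
  obtain ⟨yr, hyr⟩ := exists_cubicRe_eq (by positivity) (le_trans (le_abs_self c) hbc)
  obtain ⟨yl, hyl⟩ := exists_cubicRe_eq (by positivity) (le_trans (neg_le_abs c) hbc)
  have hyl' : cubicRe (-b, yl) = c := by
    simp only [cubicRe] at hyl ⊢; linear_combination -hyl
  obtain ⟨a, ⟨ha₁, ha₂⟩, ha⟩ := exists_cubicRe_ne c
  obtain ⟨q, hq, rfl⟩ := hconn.intermediate_value (f := Prod.fst) hyl' hyr continuousOn_fst
    ⟨by simp only; linarith, by simp only; linarith⟩
  exact ha q.2 hq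

theorem cubicIm_preimage_zero :
    cubicIm ⁻¹' {0} = range (fun t : ℝ => (t, (0 : ℝ))) ∪
      range (fun t : ℝ => (√(1 + t ^ 2 / 3), t)) ∪
      range (fun t : ℝ => (-√(1 + t ^ 2 / 3), t)) := by
  have hsq (t : ℝ) : √(1 + t ^ 2 / 3) ^ 2 = 1 + t ^ 2 / 3 := Real.sq_sqrt (by positivity)
  ext ⟨x, y⟩
  simp only [cubicIm, mem_preimage, mem_singleton_iff, mem_union, mem_range, Prod.mk.injEq]
  constructor
  · intro hxy
    rcases eq_or_ne y 0 with rfl | hy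
    · exact Or.inl (Or.inl ⟨x, rfl, rfl⟩)
    have hx : √(1 + y ^ 2 / 3) = |x| := by
      rw [← Real.sqrt_sq_eq_abs]
      congr 1
      apply mul_left_cancel₀ hy
      linear_combination -hxy / 3
    rcases le_or_gt 0 x with hx0 | hx0
    · exact Or.inl (Or.inr ⟨y, by rw [hx, abs_of_nonneg hx0], rfl⟩)
    · exact Or.inr ⟨y, by rw [hx, abs_of_neg hx0, neg_neg], rfl⟩
  · rintro ((⟨t, rfl, rfl⟩ | ⟨t, rfl, rfl⟩) | ⟨t, rfl, rfl⟩)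
    · ring
    · linear_combination 3 * t * hsq t
    · linear_combination 3 * t * hsq t

theorem isConnected_cubicIm_preimage_zero : IsConnected (cubicIm ⁻¹' {0}) := by
  have hsqrt : Continuous fun t : ℝ => √(1 + t ^ 2 / 3) := by fun_prop
  have hline : IsConnected (range fun t : ℝ => (t, (0 : ℝ))) := isConnected_range (by fun_prop)
  have hright : IsConnected (range fun t : ℝ => (√(1 + t ^ 2 / 3), t)) :=
    isConnected_range (hsqrt.prodMk continuous_id)
  have hleft : IsConnected (range fun t : ℝ => (-√(1 + t ^ 2 / 3), t)) :=
    isConnected_range (hsqrt.neg.prodMk continuous_id)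
  rw [cubicIm_preimage_zero]
  refine (hline.union ?_ hright).union ?_ hleft
  · exact ⟨(1, 0), ⟨1, rfl⟩, 0, by norm_num⟩
  · exact ⟨(-1, 0), Or.inl ⟨-1, rfl⟩, 0, by norm_num⟩

/-- The conjugate harmonic functions `u(x,y) = x³ − 3xy² − 3x` and
`v(x,y) = −y³ + 3x²y − 3y` have graphs with the same Gaussian curvature
everywhere, but `u` and `v` are not topologically equivalent. -/
theorem conjugate_harmonic_same_curvature_not_top_equiv
    (u v : ℝ × ℝ → ℝ)
    (hu : ∀ x y : ℝ, u (x, y) = x ^ 3 - 3 * x * y ^ 2 - 3 * x)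
    (hv : ∀ x y : ℝ, v (x, y) = -y ^ 3 + 3 * x ^ 2 * y - 3 * y) :
    (∀ p : ℝ × ℝ,
      (fderiv ℝ (fun q => fderiv ℝ u q (1, 0)) p (1, 0) *
         fderiv ℝ (fun q => fderiv ℝ u q (0, 1)) p (0, 1) -
       (fderiv ℝ (fun q => fderiv ℝ u q (1, 0)) p (0, 1)) ^ 2) /
        (1 + (fderiv ℝ u p (1, 0)) ^ 2 + (fderiv ℝ u p (0, 1)) ^ 2) ^ 2
      =
      (fderiv ℝ (fun q => fderiv ℝ v q (1, 0)) p (1, 0) *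
         fderiv ℝ (fun q => fderiv ℝ v q (0, 1)) p (0, 1) -
       (fderiv ℝ (fun q => fderiv ℝ v q (1, 0)) p (0, 1)) ^ 2) /
        (1 + (fderiv ℝ v p (1, 0)) ^ 2 + (fderiv ℝ v p (0, 1)) ^ 2) ^ 2) ∧
    ¬ ∃ (φ : (ℝ × ℝ) ≃ₜ (ℝ × ℝ)) (ψ : ℝ ≃ₜ ℝ),
        ∀ p : ℝ × ℝ, ψ (u p) = v (φ p) := by
  obtain rfl : u = cubicRe := funext fun p => hu p.1 p.2
  obtain rfl : v = cubicIm := funext fun p => hv p.1 p.2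
  refine ⟨congrFun graphCurvature_cubicRe_eq_cubicIm, ?_⟩
  rintro ⟨φ, ψ, h⟩
  have hzero : IsConnected (cubicIm ⁻¹' {ψ (ψ.symm 0)}) := by
    rw [ψ.apply_symm_apply]; exact isConnected_cubicIm_preimage_zero
  exact not_isPreconnected_cubicRe_preimage_singleton _
    (isConnected_preimage_singleton_of_comp_eq φ ψ.injective h hzero).isPreconnected
end

section
/- Let P and Q be complex polynomials whose degrees are different, with at least one of the two degrees at least 2. Then the curvature functions of P and Q differ: there exists z ∈ ℂ such that G_P(z) ≠ G_Q(z), i.e. −|P''(z)|²/(1 + |P'(z)|²)² ≠ −|Q''(z)|²/(1 + |Q'(z)|²)². Consequently, the Gaussian curvatures of the graphs of the harmonic polynomials Re P and Re Q do not coincide. -/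
/-!
On the real line `|R t|² = (R R̄)(t)`, where `R̄` has the conjugate coefficients. Hence, after
clearing denominators, `G_P = G_Q` on `ℝ` becomes the polynomial identity
`P'' P̄'' (1 + Q' Q̄')² = Q'' Q̄'' (1 + P' P̄')²`. For `n = deg P ≥ 2` and `m = deg Q` the left
side is nonzero of degree `2 (n - 2) + 4 (m - 1)`, while the right side vanishes if `m ≤ 1` and
has degree `2 (m - 2) + 4 (n - 1)` otherwise; so `n = m`.
-/

open Polynomial

namespace Polynomial

noncomputable def mulConj (p : ℂ[X]) : ℂ[X] := p * p.map (starRingEnd ℂ)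

theorem eval_ofReal_mulConj (p : ℂ[X]) (t : ℝ) :
    p.mulConj.eval (t : ℂ) = (‖p.eval (t : ℂ)‖ ^ 2 : ℝ) := by
  rw [mulConj, eval_mul, eval_map, ← Complex.conj_ofReal, eval₂_hom, Complex.conj_ofReal,
    Complex.mul_conj', Complex.ofReal_pow]

theorem eq_of_forall_eval_ofReal_eq {p q : ℂ[X]} (h : ∀ t : ℝ, p.eval (t : ℂ) = q.eval (t : ℂ)) :
    p = q :=
  eq_of_infinite_eval_eq p q <| (Set.infinite_range_of_injective Complex.ofReal_injective).mono <|
    Set.range_subset_iff.2 h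

theorem mulConj_eq_zero_iff {p : ℂ[X]} : p.mulConj = 0 ↔ p = 0 := by
  rw [mulConj, mul_eq_zero, Polynomial.map_eq_zero_iff (starRingEnd ℂ).injective, or_self]

theorem natDegree_mulConj (p : ℂ[X]) : p.mulConj.natDegree = 2 * p.natDegree := by
  rcases eq_or_ne p 0 with rfl | hp
  · simp [mulConj]
  rw [mulConj, natDegree_mul hp ((Polynomial.map_ne_zero_iff (starRingEnd ℂ).injective).2 hp),
    natDegree_map, two_mul]

theorem one_add_mulConj_ne_zero (p : ℂ[X]) : 1 + p.mulConj ≠ 0 := by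
  intro h
  have h0 := congrArg (eval ((0 : ℝ) : ℂ)) h
  rw [eval_add, eval_one, eval_ofReal_mulConj, eval_zero, ← Complex.ofReal_one,
    ← Complex.ofReal_add, Complex.ofReal_eq_zero] at h0
  exact absurd h0 (by positivity)

theorem natDegree_one_add_mulConj (p : ℂ[X]) : (1 + p.mulConj).natDegree = 2 * p.natDegree := by
  rcases Nat.eq_zero_or_pos p.natDegree with hp | hp
  · rw [hp, mul_zero, ← Nat.le_zero]
    exact (natDegree_add_le _ _).trans (by simp [natDegree_mulConj, hp])
  · rw [natDegree_add_eq_right_of_natDegree_lt (by simp [natDegree_mulConj]; omega),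
      natDegree_mulConj]

theorem natDegree_mulConj_mul_one_add_mulConj_sq {p : ℂ[X]} (hp : p ≠ 0) (q : ℂ[X]) :
    (p.mulConj * (1 + q.mulConj) ^ 2).natDegree = 2 * p.natDegree + 4 * q.natDegree := by
  rw [natDegree_mul (mulConj_eq_zero_iff.not.2 hp) (pow_ne_zero 2 (one_add_mulConj_ne_zero q)),
    natDegree_pow, natDegree_mulConj, natDegree_one_add_mulConj]
  ring

noncomputable def curvature (P : ℂ[X]) (z : ℂ) : ℝ :=
  -‖(derivative (derivative P)).eval z‖ ^ 2 / (1 + ‖(derivative P).eval z‖ ^ 2) ^ 2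

theorem curvature_eq_curvature_iff {P Q : ℂ[X]} {z : ℂ} :
    P.curvature z = Q.curvature z ↔
      ‖(derivative (derivative P)).eval z‖ ^ 2 * (1 + ‖(derivative Q).eval z‖ ^ 2) ^ 2 =
        ‖(derivative (derivative Q)).eval z‖ ^ 2 * (1 + ‖(derivative P).eval z‖ ^ 2) ^ 2 := by
  rw [curvature, curvature, div_eq_div_iff (by positivity) (by positivity), neg_mul, neg_mul,
    neg_inj]

theorem natDegree_eq_of_curvature_eq {P Q : ℂ[X]} (hP : 2 ≤ P.natDegree)
    (h : ∀ t : ℝ, P.curvature t = Q.curvature t) : P.natDegree = Q.natDegree := by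
  have hP'' : derivative (derivative P) ≠ 0 := by
    rw [Ne, derivative_eq_zero, natDegree_derivative]; omega
  have hid : (derivative (derivative P)).mulConj * (1 + (derivative Q).mulConj) ^ 2 =
      (derivative (derivative Q)).mulConj * (1 + (derivative P).mulConj) ^ 2 :=
    eq_of_forall_eval_ofReal_eq fun t => by
      simp only [eval_mul, eval_pow, eval_add, eval_one, eval_ofReal_mulConj]
      exact_mod_cast curvature_eq_curvature_iff.1 (h t)
  rcases eq_or_ne (derivative (derivative Q)) 0 with hQ'' | hQ''
  · rw [hQ'', mulConj_eq_zero_iff.2 rfl, zero_mul, mul_eq_zero, mulConj_eq_zero_iff] at hid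
    exact absurd (hid.resolve_right (pow_ne_zero 2 (one_add_mulConj_ne_zero _))) hP''
  · have hdeg := congrArg natDegree hid
    rw [natDegree_mulConj_mul_one_add_mulConj_sq hP'',
      natDegree_mulConj_mul_one_add_mulConj_sq hQ''] at hdeg
    simp only [natDegree_derivative] at hdeg
    omega

end Polynomial

/-- Complex polynomials of different degrees (at least one of degree ≥ 2)
have different curvature functions `G_P = -|P''|²/(1+|P'|²)²`. -/
theorem curvature_ne_of_degree_ne
    (P Q : Polynomial ℂ) (hne : P.natDegree ≠ Q.natDegree)
    (hdeg : 2 ≤ P.natDegree ∨ 2 ≤ Q.natDegree) :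
    ∃ z : ℂ,
      -(norm ((Polynomial.derivative (Polynomial.derivative P)).eval z)) ^ 2 /
          (1 + (norm ((Polynomial.derivative P).eval z)) ^ 2) ^ 2
      ≠
      -(norm ((Polynomial.derivative (Polynomial.derivative Q)).eval z)) ^ 2 /
          (1 + (norm ((Polynomial.derivative Q).eval z)) ^ 2) ^ 2 := by
  by_contra! h
  rcases hdeg with hP | hQ
  · exact hne (natDegree_eq_of_curvature_eq hP fun t => h t)
  · exact hne (natDegree_eq_of_curvature_eq hQ fun t => (h t).symm).symm
end

section
/- Let P and Q be complex polynomials, each of degree at least 2. Then the curvature functions G_P and G_Q coincide on all of ℂ (i.e. for every z ∈ ℂ, −|P''(z)|²/(1 + |P'(z)|²)² = −|Q''(z)|²/(1 + |Q'(z)|²)²) if and only if there exist complex numbers α and β with |α| = 1 such that P = α·Q + β (as polynomials, i.e. P(z) = α·Q(z) + β for all z ∈ ℂ). -/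
open Complex Polynomial

/-!
With `f = P'` and `g = Q'`, equality of the curvatures says
`|f'|² (1 + |g|²)² = |g'|² (1 + |f|²)²`. Both sides are polynomials in `z` and `z̄`, so the
identity polarizes to an identity of polynomials in two independent variables `(z, w)`, with
`|p(z)|²` replaced by `p(z) p̄(w)`. Comparing leading coefficients in `w` gives
`a f' g² = b g' f²`, i.e. `(a / f - b / g)' = 0`, and a degree count forces `f = μ g`. Put back
into the polarized identity and evaluated at a root of `g`, this gives `|μ| = 1`; integrating
`P' = μ Q'` gives `P = μ Q + β`.
-/

open ComplexConjugate
open scoped Polynomial.Bivariate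

namespace Polynomial

theorem eq_zero_of_wronskian_eq_zero {R : Type*} [CommRing R] [IsDomain R] [CharZero R]
    {p q : R[X]} (hw : wronskian p q = 0) (hlt : q.natDegree < p.natDegree) : q = 0 := by
  by_contra hq
  have hp : p ≠ 0 := ne_zero_of_natDegree_gt hlt
  rw [wronskian, sub_eq_zero] at hw
  have hlc := congr_arg leadingCoeff hw
  simp only [leadingCoeff_mul, leadingCoeff_derivative] at hlc
  have hdeg : (q.natDegree : R) = p.natDegree :=
    mul_left_cancel₀ (mul_ne_zero (leadingCoeff_ne_zero.2 hp) (leadingCoeff_ne_zero.2 hq))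
      (by linear_combination hlc)
  exact hlt.ne (Nat.cast_injective hdeg)

theorem eq_C_div_mul_of_derivative_mul_sq_eq {K : Type*} [Field K] [CharZero K] {f g : K[X]}
    {a b : K} (hf : 0 < f.natDegree) (hg : 0 < g.natDegree) (hb : b ≠ 0)
    (h : derivative f * g ^ 2 * C a = derivative g * f ^ 2 * C b) : f = C (a / b) * g := by
  have hf0 : f ≠ 0 := ne_zero_of_natDegree_gt hf
  have hg0 : g ≠ 0 := ne_zero_of_natDegree_gt hg
  -- `a / f - b / g` has zero derivative, and its numerator has degree below that of `f * g`
  have hD : C a * g - C b * f = 0 := by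
    refine eq_zero_of_wronskian_eq_zero (p := f * g) ?_ ?_
    · simp only [wronskian, derivative_mul, derivative_sub, derivative_C, zero_mul, zero_add]
      linear_combination -h
    · calc (C a * g - C b * f).natDegree ≤ max g.natDegree f.natDegree :=
            (natDegree_sub_le _ _).trans <|
              max_le_max (natDegree_C_mul_le _ _) (natDegree_C_mul_le _ _)
        _ < (f * g).natDegree := by rw [natDegree_mul hf0 hg0]; omega
  refine mul_left_cancel₀ (C_ne_zero.2 hb) ?_
  rw [← mul_assoc, ← C_mul, mul_div_cancel₀ _ hb]
  linear_combination -hD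

theorem eq_zero_of_evalEval_eq_zero {R : Type*} [CommRing R] [IsDomain R] {F : R[X][Y]}
    {s t : Set R} (hs : s.Infinite) (ht : t.Infinite)
    (h : ∀ x ∈ s, ∀ y ∈ t, F.evalEval x y = 0) : F = 0 := by
  ext n : 1
  refine eq_zero_of_infinite_isRoot _ (hs.mono fun x hx => ?_)
  have hFx : F.map (evalRingHom x) = 0 :=
    eq_zero_of_infinite_isRoot _ (ht.mono fun y hy => by
      simpa [IsRoot, map_evalRingHom_eval] using h x hx y hy)
  simpa using congr_arg (coeff · n) hFx

theorem evalEval_aevalAeval {R : Type*} [CommSemiring R] (F x y : R[X][Y]) (a b : R) :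
    (aevalAeval x y F).evalEval a b = F.evalEval (x.evalEval a b) (y.evalEval a b) := by
  rw [← coe_aevalAeval_eq_evalEval a b, ← coe_aevalAeval_eq_evalEval, ← AlgHom.comp_apply]
  congr 1
  apply (aevalAevalEquiv R R).symm.injective
  simp

-- the substitution `(z, w) = (a + i b, a - i b)` maps `ℝ × ℝ` onto `{(z, conj z)}`
theorem eq_zero_of_evalEval_conj_eq_zero {F : ℂ[X][Y]}
    (h : ∀ z, F.evalEval z (conj z) = 0) : F = 0 := by
  have hreal : (Set.range ((↑) : ℝ → ℂ)).Infinite :=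
    Set.infinite_range_of_injective ofReal_injective
  have hG : aevalAeval (C X + CC I * Y) (C X - CC I * Y) F = 0 := by
    refine eq_zero_of_evalEval_eq_zero hreal hreal ?_
    rintro _ ⟨a, rfl⟩ _ ⟨b, rfl⟩
    rw [evalEval_aevalAeval]
    simpa [evalEval_C, sub_eq_add_neg] using h (a + I * b)
  refine eq_zero_of_evalEval_eq_zero Set.infinite_univ Set.infinite_univ fun z _ w _ => ?_
  have := congr_arg (evalEval ((z + w) / 2) ((z - w) / (2 * I))) hG
  rw [evalEval_aevalAeval] at this
  convert this using 2 <;> simp [evalEval_C] <;> field_simp <;> ring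

/-- The polarization `p(z) · p̄(w)` of `z ↦ |p(z)|²`; `p̄` has the conjugate coefficients. -/
noncomputable def polarNormSq (p : ℂ[X]) : ℂ[X][Y] :=
  C p * (p.map (starRingEnd ℂ)).map C

theorem evalEval_polarNormSq_conj (p : ℂ[X]) (z : ℂ) :
    (polarNormSq p).evalEval z (conj z) = ((‖p.eval z‖ ^ 2 : ℝ) : ℂ) := by
  rw [polarNormSq, evalEval_mul, evalEval_C, evalEval_map_C, eval_map_apply, mul_conj',
    ofReal_pow]

theorem polarNormSq_C_mul (μ : ℂ) (p : ℂ[X]) :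
    polarNormSq (C μ * p) = CC (μ * conj μ) * polarNormSq p := by
  simp only [polarNormSq, CC, Polynomial.map_mul, map_C, C_mul]
  ring

theorem polarNormSq_ne_zero {p : ℂ[X]} (hp : p ≠ 0) : polarNormSq p ≠ 0 :=
  mul_ne_zero (C_ne_zero.2 hp) (by simpa using hp)

theorem leadingCoeff_polarNormSq (p : ℂ[X]) :
    (polarNormSq p).leadingCoeff = p * C (conj p.leadingCoeff) := by
  rw [polarNormSq, leadingCoeff_mul, leadingCoeff_C,
    leadingCoeff_map_of_injective C_injective, leadingCoeff_map_of_injective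
      (RingHom.injective _)]

theorem leadingCoeff_one_add_polarNormSq {p : ℂ[X]} (hp : 0 < p.natDegree) :
    (1 + polarNormSq p).leadingCoeff = p * C (conj p.leadingCoeff) := by
  have hp0 : p ≠ 0 := ne_zero_of_natDegree_gt hp
  rw [leadingCoeff_add_of_degree_lt, leadingCoeff_polarNormSq]
  rw [degree_one, polarNormSq, degree_mul, degree_C hp0, zero_add,
    degree_map_eq_of_injective C_injective, degree_map_eq_of_injective (RingHom.injective _)]
  exact natDegree_pos_iff_degree_pos.1 hp

section PolarizedCurvature

variable {f g : ℂ[X]}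

theorem polarNormSq_derivative_mul_sq_eq
    (h : ∀ z, ‖(derivative f).eval z‖ ^ 2 * (1 + ‖g.eval z‖ ^ 2) ^ 2 =
      ‖(derivative g).eval z‖ ^ 2 * (1 + ‖f.eval z‖ ^ 2) ^ 2) :
    polarNormSq (derivative f) * (1 + polarNormSq g) ^ 2 =
      polarNormSq (derivative g) * (1 + polarNormSq f) ^ 2 := by
  rw [← sub_eq_zero]
  refine eq_zero_of_evalEval_conj_eq_zero fun z => ?_
  simp only [evalEval_sub, evalEval_mul, evalEval_pow, evalEval_add, evalEval_one,
    evalEval_polarNormSq_conj]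
  exact_mod_cast sub_eq_zero.2 (h z)

theorem exists_eq_C_mul_of_polarNormSq_eq (hf : 0 < f.natDegree) (hg : 0 < g.natDegree)
    (h : polarNormSq (derivative f) * (1 + polarNormSq g) ^ 2 =
      polarNormSq (derivative g) * (1 + polarNormSq f) ^ 2) :
    ∃ μ, f = C μ * g := by
  have hlc := congr_arg leadingCoeff h
  simp only [leadingCoeff_mul, leadingCoeff_pow, leadingCoeff_polarNormSq,
    leadingCoeff_one_add_polarNormSq hf, leadingCoeff_one_add_polarNormSq hg] at hlc
  have hb : conj ((derivative g).leadingCoeff * f.leadingCoeff ^ 2) ≠ 0 := by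
    simp [hg.ne', ne_zero_of_natDegree_gt hf, ne_zero_of_natDegree_gt hg]
  refine ⟨_, eq_C_div_mul_of_derivative_mul_sq_eq
    (a := conj ((derivative f).leadingCoeff * g.leadingCoeff ^ 2)) hf hg hb ?_⟩
  simp only [map_mul, map_pow] at hlc ⊢
  linear_combination hlc

theorem norm_eq_one_of_polarNormSq_eq {μ : ℂ} (hg : 0 < g.natDegree)
    (h : polarNormSq (derivative (C μ * g)) * (1 + polarNormSq g) ^ 2 =
      polarNormSq (derivative g) * (1 + polarNormSq (C μ * g)) ^ 2) :
    ‖μ‖ = 1 := by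
  rw [derivative_C_mul, polarNormSq_C_mul, polarNormSq_C_mul] at h
  have hcancel : CC (μ * conj μ) * (1 + polarNormSq g) ^ 2 =
      (1 + CC (μ * conj μ) * polarNormSq g) ^ 2 :=
    mul_left_cancel₀ (polarNormSq_ne_zero (derivative_ne_zero.2 hg.ne'))
      (by linear_combination h)
  -- at a root `z` of `g` the identity reduces to `μ * conj μ = 1`
  obtain ⟨z, hz⟩ := exists_root (natDegree_pos_iff_degree_pos.1 hg)
  have hμ := congr_arg (evalEval z 0) hcancel
  simp only [polarNormSq, evalEval_mul, evalEval_add, evalEval_pow, evalEval_one, evalEval_C,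
    eval_C, hz.eq_zero, zero_mul, mul_zero, add_zero, one_pow, mul_one, mul_conj'] at hμ
  exact (pow_eq_one_iff_of_nonneg (norm_nonneg μ) two_ne_zero).1 (by exact_mod_cast hμ)

end PolarizedCurvature

end Polynomial

/-- For complex polynomials `P`, `Q` of degree at least 2, the curvature
functions `G_P` and `G_Q` coincide on all of `ℂ` iff `P = α·Q + β` for some
constants `α, β ∈ ℂ` with `|α| = 1`. -/
theorem curvature_eq_iff_unit_affine
    (P Q : Polynomial ℂ) (hP : 2 ≤ P.natDegree) (hQ : 2 ≤ Q.natDegree) :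
    (∀ z : ℂ,
      -(‖(Polynomial.derivative (Polynomial.derivative P)).eval z‖) ^ 2 /
          (1 + (‖(Polynomial.derivative P).eval z‖) ^ 2) ^ 2
      =
      -(‖(Polynomial.derivative (Polynomial.derivative Q)).eval z‖) ^ 2 /
          (1 + (‖(Polynomial.derivative Q).eval z‖) ^ 2) ^ 2)
    ↔ ∃ α β : ℂ, ‖α‖ = 1 ∧ P = Polynomial.C α * Q + Polynomial.C β := by
  constructor
  · intro h
    have hP' : 0 < (derivative P).natDegree := by rw [natDegree_derivative]; omega
    have hQ' : 0 < (derivative Q).natDegree := by rw [natDegree_derivative]; omega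
    have hpol :=
      polarNormSq_derivative_mul_sq_eq (f := derivative P) (g := derivative Q) fun z => by
        have hz := h z
        rwa [neg_div, neg_div, neg_inj, div_eq_div_iff (by positivity) (by positivity)] at hz
    obtain ⟨μ, hμ⟩ := exists_eq_C_mul_of_polarNormSq_eq hP' hQ' hpol
    rw [hμ] at hpol
    refine ⟨μ, (P - C μ * Q).coeff 0, norm_eq_one_of_polarNormSq_eq hQ' hpol, ?_⟩
    have hconst := eq_C_of_derivative_eq_zero (p := P - C μ * Q) (by
      rw [derivative_sub, derivative_C_mul, hμ, sub_self])
    linear_combination hconst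
  · rintro ⟨α, β, hα, rfl⟩ z
    simp [hα]
end

section
/- Let f : ℂ → ℂ be holomorphic on an open set Ω ⊆ ℂ with real part u(x,y) = Re f(x+iy) and imaginary part v(x,y) = Im f(x+iy), and let t ∈ ℝ. Define w_t(x,y) = cos(t)·u(x,y) − sin(t)·v(x,y). Then w_t = Re(e^{it}·f(x+iy)) and at every point of Ω the Gaussian curvature expression of the graph of w_t equals that of the graph of u: ((w_t)_xx·(w_t)_yy − (w_t)_xy²)/(1 + (w_t)_x² + (w_t)_y²)² = (u_xx·u_yy − u_xy²)/(1 + u_x² + u_y²)². -/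
/-!
Writing `z = x + iy` and `U = Re h` for a holomorphic `h`, the Cauchy–Riemann equations give
`U_x = Re h'`, `U_y = -Im h'`, `U_xx = -U_yy = Re h''` and `U_xy = -Im h''`. Hence the curvature
of the graph of `U` is `-|h''|² / (1 + |h'|²)²`, which only depends on `|h'|` and `|h''|`. Since
`w_t = Re (e^{it} f)` and multiplying `f` by the unimodular constant `e^{it}` does not change
`|f'|` or `|f''|`, the graphs of `w_t` and `u` have the same curvature.
-/

open Complex

noncomputable def graphGaussCurvature (U : ℝ × ℝ → ℝ) (p : ℝ × ℝ) : ℝ :=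
  (fderiv ℝ (fun q => fderiv ℝ U q (1, 0)) p (1, 0) *
      fderiv ℝ (fun q => fderiv ℝ U q (0, 1)) p (0, 1) -
    (fderiv ℝ (fun q => fderiv ℝ U q (1, 0)) p (0, 1)) ^ 2) /
    (1 + (fderiv ℝ U p (1, 0)) ^ 2 + (fderiv ℝ U p (0, 1)) ^ 2) ^ 2

theorem re_exp_ofReal_mul_I_mul (t : ℝ) (z : ℂ) :
    (exp (t * I) * z).re = Real.cos t * z.re - Real.sin t * z.im := by
  rw [mul_re, exp_ofReal_mul_I_re, exp_ofReal_mul_I_im]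

theorem fderiv_re_comp_apply {h : ℂ → ℂ} {x y : ℝ} (hh : DifferentiableAt ℂ h (x + y * I))
    (a b : ℝ) :
    fderiv ℝ (fun p : ℝ × ℝ => (h (p.1 + p.2 * I)).re) (x, y) (a, b)
      = (deriv h (x + y * I) * (a + b * I)).re := by
  have hcoord : (fun p : ℝ × ℝ => (p.1 : ℂ) + p.2 * I) = equivRealProdCLM.symm := by
    funext p
    rw [equivRealProdCLM_symm_apply]
  have hL : HasFDerivAt (fun p : ℝ × ℝ => (p.1 : ℂ) + p.2 * I)
      (equivRealProdCLM.symm : ℝ × ℝ →L[ℝ] ℂ) (x, y) := by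
    rw [hcoord]
    exact equivRealProdCLM.symm.hasFDerivAt
  have hcomp : HasFDerivAt (fun p : ℝ × ℝ => (h (p.1 + p.2 * I)).re) _ (x, y) :=
    reCLM.hasFDerivAt.comp (x, y) ((hh.hasDerivAt.hasFDerivAt.restrictScalars ℝ).comp (x, y) hL)
  rw [hcomp.fderiv]
  simp [equivRealProdCLM_symm_apply, mul_comm]

theorem fderiv_fderiv_re_comp_apply {Ω : Set ℂ} (hΩ : IsOpen Ω) {h : ℂ → ℂ}
    (hh : DifferentiableOn ℂ h Ω) {x y : ℝ} (hz : (x : ℂ) + y * I ∈ Ω) (a b a' b' : ℝ) :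
    fderiv ℝ (fun q => fderiv ℝ (fun p : ℝ × ℝ => (h (p.1 + p.2 * I)).re) q (a, b)) (x, y)
        (a', b')
      = (deriv (deriv h) (x + y * I) * (a + b * I) * (a' + b' * I)).re := by
  have hpre : IsOpen {q : ℝ × ℝ | (q.1 : ℂ) + q.2 * I ∈ Ω} :=
    hΩ.preimage (by fun_prop)
  have hfirst : (fun q => fderiv ℝ (fun p : ℝ × ℝ => (h (p.1 + p.2 * I)).re) q (a, b))
      =ᶠ[nhds (x, y)] fun q : ℝ × ℝ => (deriv h (q.1 + q.2 * I) * (a + b * I)).re := by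
    filter_upwards [hpre.mem_nhds hz] with q hq
    exact fderiv_re_comp_apply (hh.differentiableAt (hΩ.mem_nhds hq)) a b
  have hderiv : DifferentiableAt ℂ (deriv h) (x + y * I) :=
    ((hh.analyticOnNhd hΩ).deriv _ hz).differentiableAt
  rw [hfirst.fderiv_eq, fderiv_re_comp_apply (h := fun z => deriv h z * (a + b * I))
    (hderiv.mul_const _) a' b', deriv_mul_const hderiv]

theorem graphGaussCurvature_re_comp {Ω : Set ℂ} (hΩ : IsOpen Ω) {h : ℂ → ℂ}
    (hh : DifferentiableOn ℂ h Ω) {x y : ℝ} (hz : (x : ℂ) + y * I ∈ Ω) :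
    graphGaussCurvature (fun p => (h (p.1 + p.2 * I)).re) (x, y)
      = -‖deriv (deriv h) (x + y * I)‖ ^ 2 / (1 + ‖deriv h (x + y * I)‖ ^ 2) ^ 2 := by
  have hd := hh.differentiableAt (hΩ.mem_nhds hz)
  simp only [graphGaussCurvature, fderiv_fderiv_re_comp_apply hΩ hh hz,
    fderiv_re_comp_apply hd, Complex.sq_norm, normSq_apply, ofReal_one, ofReal_zero, zero_mul,
    add_zero, mul_one, one_mul, zero_add, mul_re, mul_im, I_re, I_im, mul_zero]
  ring

/-- For `f` holomorphic on `Ω` with real and imaginary parts `u`, `v`, the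
function `w_t = cos t · u − sin t · v` equals `Re (e^{it} f)` and its graph
has the same Gaussian curvature as the graph of `u` at every point of `Ω`. -/
theorem loop_of_harmonic_functions_same_curvature
    (Ω : Set ℂ) (hΩ : IsOpen Ω) (f : ℂ → ℂ)
    (hf : ∀ z ∈ Ω, DifferentiableAt ℂ f z)
    (u v : ℝ × ℝ → ℝ)
    (hu : ∀ x y : ℝ, u (x, y) = (f (x + y * Complex.I)).re)
    (hv : ∀ x y : ℝ, v (x, y) = (f (x + y * Complex.I)).im)
    (t : ℝ) (w : ℝ × ℝ → ℝ)
    (hw : ∀ p : ℝ × ℝ, w p = Real.cos t * u p - Real.sin t * v p) :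
    (∀ x y : ℝ,
      w (x, y) = (Complex.exp (t * Complex.I) * f (x + y * Complex.I)).re) ∧
    ∀ x y : ℝ, (x + y * Complex.I) ∈ Ω →
      (fderiv ℝ (fun q => fderiv ℝ w q (1, 0)) (x, y) (1, 0) *
         fderiv ℝ (fun q => fderiv ℝ w q (0, 1)) (x, y) (0, 1) -
       (fderiv ℝ (fun q => fderiv ℝ w q (1, 0)) (x, y) (0, 1)) ^ 2) /
        (1 + (fderiv ℝ w (x, y) (1, 0)) ^ 2 + (fderiv ℝ w (x, y) (0, 1)) ^ 2) ^ 2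
      =
      (fderiv ℝ (fun q => fderiv ℝ u q (1, 0)) (x, y) (1, 0) *
         fderiv ℝ (fun q => fderiv ℝ u q (0, 1)) (x, y) (0, 1) -
       (fderiv ℝ (fun q => fderiv ℝ u q (1, 0)) (x, y) (0, 1)) ^ 2) /
        (1 + (fderiv ℝ u (x, y) (1, 0)) ^ 2 + (fderiv ℝ u (x, y) (0, 1)) ^ 2) ^ 2 := by
  have hw_re : ∀ x y : ℝ, w (x, y) = (exp (t * I) * f (x + y * I)).re := fun x y => by
    rw [hw, hu, hv, re_exp_ofReal_mul_I_mul]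
  refine ⟨hw_re, fun x y hz => ?_⟩
  have hf_on : DifferentiableOn ℂ f Ω := fun z hz => (hf z hz).differentiableWithinAt
  have hw_eq : w = fun p => (exp (t * I) * f (p.1 + p.2 * I)).re :=
    funext fun p => hw_re p.1 p.2
  have hu_eq : u = fun p => (f (p.1 + p.2 * I)).re := funext fun p => hu p.1 p.2
  change graphGaussCurvature w (x, y) = graphGaussCurvature u (x, y)
  rw [hw_eq, hu_eq, graphGaussCurvature_re_comp hΩ (hf_on.const_mul _) hz,
    graphGaussCurvature_re_comp hΩ hf_on hz]
  simp only [deriv_const_mul_field', norm_mul, norm_exp_ofReal_mul_I, one_mul]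
end
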